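/- Let R be a strictly dense set of rooted triples on a leaf set L with |L| = 4. If for every two-element subset R' ⊆ R the closure cl(R') is contained in R, then R is consistent. -/

import Mathlib

namespace Phylo

/-- Rooted trees with leaves labeled by `L`. -/
inductive T (L : Type) where
  | leaf (x : L) : T L
  | node (ts : List (T L)) : T L

/-- `Subtree s t`: `s` is the subtree of `t` rooted at some vertex of `t`. -/
inductive Subtree {L : Type} : T L → T L → Prop where
  | refl (t : T L) : Subtree t t
  | child {s u : T L} {ts : List (T L)} : s ∈ ts → Subtree u s → Subtree u (T.node ts)

/-- The list of leaf labels of a tree. -/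
def leafList {L : Type} : T L → List L
  | T.leaf x => [x]
  | T.node ts => (ts.attach.map (fun s => leafList s.1)).flatten
decreasing_by all_goals (simp_wf; have := List.sizeOf_lt_of_mem s.2; omega)

/-- A phylogenetic tree: every inner vertex has at least two children. -/
inductive IsPhylo {L : Type} : T L → Prop where
  | leaf (x : L) : IsPhylo (T.leaf x)
  | node {ts : List (T L)} : 2 ≤ ts.length → (∀ t ∈ ts, IsPhylo t) → IsPhylo (T.node ts)

/-- A phylogenetic tree with pairwise distinct leaf labels. -/
def PhyloTree {L : Type} (t : T L) : Prop := IsPhylo t ∧ (leafList t).Nodup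

/-- A binary tree: every inner vertex has exactly two children. -/
inductive BinaryT {L : Type} : T L → Prop where
  | leaf (x : L) : BinaryT (T.leaf x)
  | node {ts : List (T L)} : ts.length = 2 → (∀ t ∈ ts, BinaryT t) → BinaryT (T.node ts)

def numVertices {L : Type} : T L → ℕ
  | T.leaf _ => 1
  | T.node ts => 1 + (ts.attach.map (fun s => numVertices s.1)).sum
decreasing_by all_goals (simp_wf; have := List.sizeOf_lt_of_mem s.2; omega)

def numLeaves {L : Type} : T L → ℕ
  | T.leaf _ => 1
  | T.node ts => (ts.attach.map (fun s => numLeaves s.1)).sum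
decreasing_by all_goals (simp_wf; have := List.sizeOf_lt_of_mem s.2; omega)

def numInner {L : Type} : T L → ℕ
  | T.leaf _ => 0
  | T.node ts => 1 + (ts.attach.map (fun s => numInner s.1)).sum
decreasing_by all_goals (simp_wf; have := List.sizeOf_lt_of_mem s.2; omega)

/-- `C` is a cluster of `t`: the set of leaves below some vertex of `t`. -/
def IsCluster {L : Type} (t : T L) (C : Set L) : Prop :=
  ∃ s, Subtree s t ∧ ∀ x, x ∈ leafList s ↔ x ∈ C

def clusterSet {L : Type} (t : T L) : Set (Set L) := {C | IsCluster t C}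

/-- The tree `t` displays the rooted triple `(ab|c)`. -/
def Displays {L : Type} (t : T L) (a b c : L) : Prop :=
  a ≠ b ∧ a ≠ c ∧ b ≠ c ∧ a ∈ leafList t ∧ b ∈ leafList t ∧ c ∈ leafList t ∧
    ∃ s, Subtree s t ∧ a ∈ leafList s ∧ b ∈ leafList s ∧ c ∉ leafList s

/-- A rooted triple `(ab|c)`. -/
structure Trip (L : Type) where
  a : L
  b : L
  c : L

def Trip.proper {L : Type} (r : Trip L) : Prop := r.a ≠ r.b ∧ r.a ≠ r.c ∧ r.b ≠ r.c

def DisplaysT {L : Type} (t : T L) (r : Trip L) : Prop := Displays t r.a r.b r.c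

def DisplaysAll {L : Type} (t : T L) (R : Set (Trip L)) : Prop := ∀ r ∈ R, DisplaysT t r

def tripLeaves {L : Type} (r : Trip L) : Set L := {r.a, r.b, r.c}

/-- The leaf set `L_R` of a triple set. -/
def leafSetR {L : Type} (R : Set (Trip L)) : Set L := ⋃ r ∈ R, tripLeaves r

/-- `t` is a phylogenetic tree on the leaf set `L_R` displaying all triples of `R`. -/
def IsTreeFor {L : Type} (t : T L) (R : Set (Trip L)) : Prop :=
  PhyloTree t ∧ (∀ x, x ∈ leafList t ↔ x ∈ leafSetR R) ∧ DisplaysAll t R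

/-- `R` is consistent: some phylogenetic tree on `L_R` displays all triples of `R`. -/
def Consistent {L : Type} (R : Set (Trip L)) : Prop := ∃ t, IsTreeFor t R

/-- `R` is consistent relative to the leaf set `S`. -/
def ConsistentOn {L : Type} (R : Set (Trip L)) (S : Set L) : Prop :=
  ∃ t : T L, PhyloTree t ∧ (∀ x, x ∈ leafList t ↔ x ∈ S) ∧ DisplaysAll t R

/-- The closure of `R`: all triples displayed by every phylogenetic tree on `L_R`
displaying `R`. -/
def cl {L : Type} (R : Set (Trip L)) : Set (Trip L) :=
  {r | ∀ t : T L, IsTreeFor t R → DisplaysT t r}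

/-- Membership of the (unordered) rooted triple `(xy|z)` in `R`. -/
def MemS {L : Type} (R : Set (Trip L)) (x y z : L) : Prop :=
  Trip.mk x y z ∈ R ∨ Trip.mk y x z ∈ R

/-- All triples of `R` have pairwise distinct leaves taken from `S`. -/
def ProperOn {L : Type} (R : Set (Trip L)) (S : Set L) : Prop :=
  ∀ r ∈ R, r.a ∈ S ∧ r.b ∈ S ∧ r.c ∈ S ∧ r.proper

/-- `R` is dense on `S`: each 3-element subset of `S` carries at least one triple of `R`. -/
def DenseOn {L : Type} (R : Set (Trip L)) (S : Set L) : Prop :=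
  ProperOn R S ∧ ∀ x y z : L, x ∈ S → y ∈ S → z ∈ S → x ≠ y → x ≠ z → y ≠ z →
    (MemS R x y z ∨ MemS R x z y ∨ MemS R y z x)

/-- `R` is strictly dense on `S`: each 3-element subset of `S` carries exactly one
of the three possible rooted triples. -/
def StrictlyDense {L : Type} (R : Set (Trip L)) (S : Set L) : Prop :=
  ProperOn R S ∧ ∀ x y z : L, x ∈ S → y ∈ S → z ∈ S → x ≠ y → x ≠ z → y ≠ z →
    ((MemS R x y z ∧ ¬ MemS R x z y ∧ ¬ MemS R y z x) ∨
     (¬ MemS R x y z ∧ MemS R x z y ∧ ¬ MemS R y z x) ∨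
     (¬ MemS R x y z ∧ ¬ MemS R x z y ∧ MemS R y z x))

/-- The Aho graph `[R, S]`: vertices `S`, edges `{x,y}` for triples `(xy|z) ∈ R`
with `x,y,z ∈ S`. -/
def ahoGraph {L : Type} (R : Set (Trip L)) (S : Set L) : SimpleGraph S where
  Adj x y := x ≠ y ∧ ∃ r ∈ R, (r.c ∈ S) ∧
      ((r.a = (x : L) ∧ r.b = (y : L)) ∨ (r.a = (y : L) ∧ r.b = (x : L)))
  symm := by
    constructor
    rintro x y ⟨hxy, r, hr, hc, h⟩
    exact ⟨hxy.symm, r, hr, hc, h.symm⟩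
  loopless := by constructor; rintro x ⟨h, -⟩; exact h rfl


section Aux
variable {L : Type}

theorem leafList_node (ts : List (T L)) :
    leafList (T.node ts) = (ts.map leafList).flatten := by
  rw [leafList]
  congr 1
  simp [List.map_attach_eq_pmap]

theorem subtree_leaves {s t : T L} (h : Subtree s t) :
    ∀ x ∈ leafList s, x ∈ leafList t := by
  induction h with
  | refl => exact fun x hx => hx
  | child hmem hsub ih =>
    intro x hx
    rw [leafList_node, List.mem_flatten]
    exact ⟨_, List.mem_map_of_mem hmem, ih x hx⟩

theorem nested {t : T L} (hnd : (leafList t).Nodup) :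
    ∀ {s1 s2 : T L} {x : L}, Subtree s1 t → Subtree s2 t →
    x ∈ leafList s1 → x ∈ leafList s2 →
    (∀ y ∈ leafList s1, y ∈ leafList s2) ∨ (∀ y ∈ leafList s2, y ∈ leafList s1) := by
  intro s1 s2 x h1
  induction h1 generalizing s2 with
  | refl t => intro h2 _ _; exact Or.inr (subtree_leaves h2)
  | @child u1 w1 ts hmem1 hsub1 ih =>
    intro h2 hx1 hx2
    cases h2 with
    | refl => exact Or.inl (subtree_leaves (Subtree.child hmem1 hsub1))
    | child hmem2 hsub2 =>
      rename_i u2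
      have hndn := hnd
      rw [leafList_node, List.nodup_flatten] at hndn
      have hpw : List.Pairwise (fun a b : T L => List.Disjoint (leafList a) (leafList b)) ts := by
        have := hndn.2
        rwa [List.pairwise_map] at this
      have hxu1 : x ∈ leafList u1 := subtree_leaves hsub1 x hx1
      have hxu2 : x ∈ leafList u2 := subtree_leaves hsub2 x hx2
      have heq : u1 = u2 := by
        by_contra hne
        haveI : Std.Symm (fun a b : T L => List.Disjoint (leafList a) (leafList b)) := ⟨fun a b h => List.Disjoint.symm h⟩
        exact (hpw.forall hmem1 hmem2 hne) hxu1 hxu2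
      subst heq
      have hndu : (leafList u1).Nodup := hndn.1 _ (List.mem_map_of_mem hmem1)
      exact ih hndu hsub2 hx1 hx2

theorem MemS_swap {R : Set (Trip L)} {x y z : L} (h : MemS R x y z) : MemS R y x z := by
  unfold MemS at h ⊢; exact h.symm

theorem displays_comm {t : T L} {a b c : L} (h : Displays t a b c) : Displays t b a c := by
  obtain ⟨h1, h2, h3, h4, h5, h6, s, hs, ha, hb, hc⟩ := h
  exact ⟨h1.symm, h3, h2, h5, h4, h6, s, hs, hb, ha, hc⟩

theorem rule_A {t : T L} (hnd : (leafList t).Nodup) {a b c d : L} (hbd : b ≠ d)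
    (h1 : Displays t a b c) (h2 : Displays t a d c) : Displays t b d c := by
  obtain ⟨hab, hac, hbc, hat, hbt, hct, s1, hs1, ha1, hb1, hc1⟩ := h1
  obtain ⟨had, -, hdc, -, hdt, -, s2, hs2, ha2, hd2, hc2⟩ := h2
  rcases nested hnd hs1 hs2 ha1 ha2 with h | h
  · exact ⟨hbd, hbc, hdc, hbt, hdt, hct, s2, hs2, h b hb1, hd2, hc2⟩
  · exact ⟨hbd, hbc, hdc, hbt, hdt, hct, s1, hs1, hb1, h d hd2, hc1⟩

theorem rule_B {t : T L} (hnd : (leafList t).Nodup) {a b c d : L}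
    (h1 : Displays t a b c) (h2 : Displays t a d b) :
    Displays t a d c ∧ Displays t b d c := by
  obtain ⟨hab, hac, hbc, hat, hbt, hct, s1, hs1, ha1, hb1, hc1⟩ := h1
  obtain ⟨had, -, hdb, -, hdt, -, s2, hs2, ha2, hd2, hb2⟩ := h2
  rcases nested hnd hs1 hs2 ha1 ha2 with h | h
  · exact absurd (h b hb1) hb2
  · have hd1 : d ∈ leafList s1 := h d hd2
    have hdc : d ≠ c := fun he => hc1 (he ▸ hd1)
    have hbd : b ≠ d := fun he => hb2 (he ▸ hd2)
    exact ⟨⟨had, hac, hdc, hat, hdt, hct, s1, hs1, ha1, hd1, hc1⟩,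
           ⟨hbd, hbc, hdc, hbt, hdt, hct, s1, hs1, hb1, hd1, hc1⟩⟩

theorem rule_C {t : T L} (hnd : (leafList t).Nodup) {a b c d : L}
    (h1 : Displays t a b c) (h2 : Displays t c d b) :
    Displays t a b d ∧ Displays t c d a := by
  obtain ⟨hab, hac, hbc, hat, hbt, hct, s1, hs1, ha1, hb1, hc1⟩ := h1
  obtain ⟨hcd, -, hdb, -, hdt, -, s2, hs2, hc2, hd2, hb2⟩ := h2
  have hd1 : d ∉ leafList s1 := by
    intro hd1
    rcases nested hnd hs1 hs2 hd1 hd2 with h | h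
    · exact hb2 (h b hb1)
    · exact hc1 (h c hc2)
  have ha2 : a ∉ leafList s2 := by
    intro ha2
    rcases nested hnd hs1 hs2 ha1 ha2 with h | h
    · exact hb2 (h b hb1)
    · exact hc1 (h c hc2)
  have had : a ≠ d := fun he => hd1 (he ▸ ha1)
  have hbd : b ≠ d := fun he => hb2 (he ▸ hd2)
  have hda : d ≠ a := fun he => ha2 (he ▸ hd2)
  have hca : c ≠ a := Ne.symm hac
  exact ⟨⟨hab, had, hbd, hat, hbt, hdt, s1, hs1, ha1, hb1, hd1⟩,
         ⟨hcd, hca, hda, hct, hdt, hat, s2, hs2, hc2, hd2, ha2⟩⟩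

theorem pair_closure {R : Set (Trip L)}
    (hcl : ∀ R' ⊆ R, R'.ncard = 2 → ∀ r ∈ cl R', MemS R r.a r.b r.c)
    {x y z u v w p q s : L}
    (h1 : MemS R x y z) (h2 : MemS R u v w)
    (hne : z ≠ w ∨ (y ≠ u ∧ y ≠ v))
    (hrule : ∀ t : T L, (leafList t).Nodup →
      Displays t x y z → Displays t u v w → Displays t p q s) :
    MemS R p q s := by
  have key : ∀ r1 r2 : Trip L, r1 ∈ R → r2 ∈ R → r1 ≠ r2 →
      (∀ t : T L, DisplaysT t r1 → Displays t x y z) →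
      (∀ t : T L, DisplaysT t r2 → Displays t u v w) → MemS R p q s := by
    intro r1 r2 hr1 hr2 hne12 hd1 hd2
    have hsub : {r1, r2} ⊆ R := by
      intro r hr; rcases hr with rfl | hr
      · exact hr1
      · exact Set.mem_singleton_iff.mp hr ▸ hr2
    have hcard : ({r1, r2} : Set (Trip L)).ncard = 2 := Set.ncard_pair hne12
    have hmem : (⟨p, q, s⟩ : Trip L) ∈ cl {r1, r2} := by
      intro t ht
      have hnd : (leafList t).Nodup := ht.1.2
      have d1 := ht.2.2 r1 (Set.mem_insert _ _)
      have d2 := ht.2.2 r2 (Set.mem_insert_of_mem _ rfl)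
      exact hrule t hnd (hd1 t d1) (hd2 t d2)
    exact hcl {r1, r2} hsub hcard _ hmem
  have hne' : ∀ (r1 r2 : Trip L),
      (r1 = ⟨x, y, z⟩ ∨ r1 = ⟨y, x, z⟩) → (r2 = ⟨u, v, w⟩ ∨ r2 = ⟨v, u, w⟩) → r1 ≠ r2 := by
    rintro r1 r2 (rfl | rfl) (rfl | rfl) he <;>
      injection he with e1 e2 e3 <;>
      rcases hne with hzw | ⟨hyu, hyv⟩ <;> first
        | exact hzw e3
        | exact hyv e2
        | exact hyu e2
        | exact hyu e1
        | exact hyv e1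
  rcases h1 with hr1 | hr1 <;> rcases h2 with hr2 | hr2
  · exact key _ _ hr1 hr2 (hne' _ _ (Or.inl rfl) (Or.inl rfl))
      (fun t hd => hd) (fun t hd => hd)
  · exact key _ _ hr1 hr2 (hne' _ _ (Or.inl rfl) (Or.inr rfl))
      (fun t hd => hd) (fun t hd => displays_comm hd)
  · exact key _ _ hr1 hr2 (hne' _ _ (Or.inr rfl) (Or.inl rfl))
      (fun t hd => displays_comm hd) (fun t hd => hd)
  · exact key _ _ hr1 hr2 (hne' _ _ (Or.inr rfl) (Or.inr rfl))
      (fun t hd => displays_comm hd) (fun t hd => displays_comm hd)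

end Aux

theorem leafList_leaf (x : L) : leafList (T.leaf x) = [x] := by rw [leafList]

theorem isPhylo_pair {t1 t2 : T L} (h1 : IsPhylo t1) (h2 : IsPhylo t2) :
    IsPhylo (T.node [t1, t2]) := by
  refine IsPhylo.node (by simp) ?_
  intro s hs
  simp only [List.mem_cons, List.mem_singleton, List.not_mem_nil, or_false] at hs
  rcases hs with rfl | rfl
  · exact h1
  · exact h2

theorem displaysAll_helper {R : Set (Trip L)} {S : Set L} {t : T L}
    (hsd : StrictlyDense R S)
    (hdisp : ∀ x y z : L, x ∈ S → y ∈ S → z ∈ S → x ≠ y → x ≠ z → y ≠ z →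
      MemS R x y z → Displays t x y z) :
    DisplaysAll t R := by
  intro r hr
  obtain ⟨p, q, s⟩ := r
  obtain ⟨hpS, hqS, hsS, hpq, hps, hqs⟩ := hsd.1 _ hr
  show Displays t p q s
  exact hdisp p q s hpS hqS hsS hpq hps hqs (Or.inl hr)

theorem cat_works {R : Set (Trip L)} {S : Set L} (hsd : StrictlyDense R S)
    (a b c d : L) (hS : S = {a, b, c, d})
    (hab : a ≠ b) (hac : a ≠ c) (had : a ≠ d) (hbc : b ≠ c) (hbd : b ≠ d) (hcd : c ≠ d)
    (m1 : MemS R a b c) (m2 : MemS R a b d) (m3 : MemS R a c d) (m4 : MemS R b c d) :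
    ConsistentOn R S := by
  have ha : a ∈ S := by rw [hS]; simp
  have hb : b ∈ S := by rw [hS]; simp
  have hc : c ∈ S := by rw [hS]; simp
  have hd : d ∈ S := by rw [hS]; simp
  obtain ⟨n1a, n1b⟩ : ¬MemS R a c b ∧ ¬MemS R b c a := by
    rcases hsd.2 a b c ha hb hc hab hac hbc with ⟨-, u, v⟩ | ⟨u, -, -⟩ | ⟨u, -, -⟩
    · exact ⟨u, v⟩
    · exact absurd m1 u
    · exact absurd m1 u
  obtain ⟨n2a, n2b⟩ : ¬MemS R a d b ∧ ¬MemS R b d a := by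
    rcases hsd.2 a b d ha hb hd hab had hbd with ⟨-, u, v⟩ | ⟨u, -, -⟩ | ⟨u, -, -⟩
    · exact ⟨u, v⟩
    · exact absurd m2 u
    · exact absurd m2 u
  obtain ⟨n3a, n3b⟩ : ¬MemS R a d c ∧ ¬MemS R c d a := by
    rcases hsd.2 a c d ha hc hd hac had hcd with ⟨-, u, v⟩ | ⟨u, -, -⟩ | ⟨u, -, -⟩
    · exact ⟨u, v⟩
    · exact absurd m3 u
    · exact absurd m3 u
  obtain ⟨n4a, n4b⟩ : ¬MemS R b d c ∧ ¬MemS R c d b := by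
    rcases hsd.2 b c d hb hc hd hbc hbd hcd with ⟨-, u, v⟩ | ⟨u, -, -⟩ | ⟨u, -, -⟩
    · exact ⟨u, v⟩
    · exact absurd m4 u
    · exact absurd m4 u
  let s1 : T L := T.node [T.leaf a, T.leaf b]
  let s2 : T L := T.node [s1, T.leaf c]
  let t : T L := T.node [s2, T.leaf d]
  have hl1 : leafList s1 = [a, b] := by
    simp [s1, leafList_node, leafList_leaf]
  have hl2 : leafList s2 = [a, b, c] := by
    simp [s1, s2, leafList_node, leafList_leaf]
  have hlt : leafList t = [a, b, c, d] := by
    simp [s1, s2, t, leafList_node, leafList_leaf]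
  have hsub1 : Subtree s1 t :=
    Subtree.child (List.mem_cons_self) (Subtree.child (List.mem_cons_self) (Subtree.refl _))
  have hsub2 : Subtree s2 t := Subtree.child (List.mem_cons_self) (Subtree.refl _)
  have hmem : ∀ x : L, x ∈ S → x ∈ leafList t := by
    intro x hx; rw [hlt]; rw [hS] at hx; simpa using hx
  have d1 : Displays t a b c := by
    refine ⟨hab, hac, hbc, hmem a ha, hmem b hb, hmem c hc, s1, hsub1, ?_, ?_, ?_⟩ <;>
      simp [hl1, Ne.symm hac, Ne.symm hbc]
  have d2 : Displays t a b d := by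
    refine ⟨hab, had, hbd, hmem a ha, hmem b hb, hmem d hd, s1, hsub1, ?_, ?_, ?_⟩ <;>
      simp [hl1, Ne.symm had, Ne.symm hbd]
  have d3 : Displays t a c d := by
    refine ⟨hac, had, hcd, hmem a ha, hmem c hc, hmem d hd, s2, hsub2, ?_, ?_, ?_⟩ <;>
      simp [hl2, Ne.symm had, Ne.symm hbd, Ne.symm hcd]
  have d4 : Displays t b c d := by
    refine ⟨hbc, hbd, hcd, hmem b hb, hmem c hc, hmem d hd, s2, hsub2, ?_, ?_, ?_⟩ <;>
      simp [hl2, Ne.symm had, Ne.symm hbd, Ne.symm hcd]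
  refine ⟨t, ⟨?_, ?_⟩, ?_, ?_⟩
  · exact isPhylo_pair (isPhylo_pair (isPhylo_pair (.leaf a) (.leaf b)) (.leaf c)) (.leaf d)

  · rw [hlt]; simp [hab, hac, had, hbc, hbd, hcd]
  · intro x; rw [hlt, hS]; simp
  · refine displaysAll_helper hsd ?_
    intro x y z hx hy hz hxy hxz hyz hm
    rw [hS] at hx hy hz
    simp only [Set.mem_insert_iff, Set.mem_singleton_iff] at hx hy hz
    rcases hx with rfl | rfl | rfl | rfl <;> rcases hy with rfl | rfl | rfl | rfl <;>
      rcases hz with rfl | rfl | rfl | rfl <;>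
      first
        | exact absurd rfl hxy
        | exact absurd rfl hxz
        | exact absurd rfl hyz
        | exact d1 | exact displays_comm d1
        | exact d2 | exact displays_comm d2
        | exact d3 | exact displays_comm d3
        | exact d4 | exact displays_comm d4
        | exact absurd hm n1a | exact absurd (MemS_swap hm) n1a
        | exact absurd hm n1b | exact absurd (MemS_swap hm) n1b
        | exact absurd hm n2a | exact absurd (MemS_swap hm) n2a
        | exact absurd hm n2b | exact absurd (MemS_swap hm) n2b
        | exact absurd hm n3a | exact absurd (MemS_swap hm) n3a
        | exact absurd hm n3b | exact absurd (MemS_swap hm) n3b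
        | exact absurd hm n4a | exact absurd (MemS_swap hm) n4a
        | exact absurd hm n4b | exact absurd (MemS_swap hm) n4b

theorem bal_works {R : Set (Trip L)} {S : Set L} (hsd : StrictlyDense R S)
    (a b c d : L) (hS : S = {a, b, c, d})
    (hab : a ≠ b) (hac : a ≠ c) (had : a ≠ d) (hbc : b ≠ c) (hbd : b ≠ d) (hcd : c ≠ d)
    (m1 : MemS R a b c) (m2 : MemS R a b d) (m3 : MemS R c d a) (m4 : MemS R c d b) :
    ConsistentOn R S := by
  have ha : a ∈ S := by rw [hS]; simp
  have hb : b ∈ S := by rw [hS]; simp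
  have hc : c ∈ S := by rw [hS]; simp
  have hd : d ∈ S := by rw [hS]; simp
  obtain ⟨n1a, n1b⟩ : ¬MemS R a c b ∧ ¬MemS R b c a := by
    rcases hsd.2 a b c ha hb hc hab hac hbc with ⟨-, u, v⟩ | ⟨u, -, -⟩ | ⟨u, -, -⟩
    · exact ⟨u, v⟩
    · exact absurd m1 u
    · exact absurd m1 u
  obtain ⟨n2a, n2b⟩ : ¬MemS R a d b ∧ ¬MemS R b d a := by
    rcases hsd.2 a b d ha hb hd hab had hbd with ⟨-, u, v⟩ | ⟨u, -, -⟩ | ⟨u, -, -⟩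
    · exact ⟨u, v⟩
    · exact absurd m2 u
    · exact absurd m2 u
  obtain ⟨n3a, n3b⟩ : ¬MemS R a c d ∧ ¬MemS R a d c := by
    rcases hsd.2 a c d ha hc hd hac had hcd with ⟨-, -, w⟩ | ⟨-, -, w⟩ | ⟨u, v, -⟩
    · exact absurd m3 w
    · exact absurd m3 w
    · exact ⟨u, v⟩
  obtain ⟨n4a, n4b⟩ : ¬MemS R b c d ∧ ¬MemS R b d c := by
    rcases hsd.2 b c d hb hc hd hbc hbd hcd with ⟨-, -, w⟩ | ⟨-, -, w⟩ | ⟨u, v, -⟩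
    · exact absurd m4 w
    · exact absurd m4 w
    · exact ⟨u, v⟩
  let s1 : T L := T.node [T.leaf a, T.leaf b]
  let s2 : T L := T.node [T.leaf c, T.leaf d]
  let t : T L := T.node [s1, s2]
  have hl1 : leafList s1 = [a, b] := by
    simp [s1, leafList_node, leafList_leaf]
  have hl2 : leafList s2 = [c, d] := by
    simp [s2, leafList_node, leafList_leaf]
  have hlt : leafList t = [a, b, c, d] := by
    simp [s1, s2, t, leafList_node, leafList_leaf]
  have hsub1 : Subtree s1 t := Subtree.child (List.mem_cons_self) (Subtree.refl _)
  have hsub2 : Subtree s2 t := by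
    refine Subtree.child (ts := [s1, s2]) ?_ (Subtree.refl _)
    simp
  have hmem : ∀ x : L, x ∈ S → x ∈ leafList t := by
    intro x hx; rw [hlt]; rw [hS] at hx; simpa using hx
  have d1 : Displays t a b c := by
    refine ⟨hab, hac, hbc, hmem a ha, hmem b hb, hmem c hc, s1, hsub1, ?_, ?_, ?_⟩ <;>
      simp [hl1, Ne.symm hac, Ne.symm hbc]
  have d2 : Displays t a b d := by
    refine ⟨hab, had, hbd, hmem a ha, hmem b hb, hmem d hd, s1, hsub1, ?_, ?_, ?_⟩ <;>
      simp [hl1, Ne.symm had, Ne.symm hbd]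
  have d3 : Displays t c d a := by
    refine ⟨hcd, Ne.symm hac, Ne.symm had, hmem c hc, hmem d hd, hmem a ha, s2, hsub2, ?_, ?_, ?_⟩ <;>
      simp [hl2, hac, had]
  have d4 : Displays t c d b := by
    refine ⟨hcd, Ne.symm hbc, Ne.symm hbd, hmem c hc, hmem d hd, hmem b hb, s2, hsub2, ?_, ?_, ?_⟩ <;>
      simp [hl2, hbc, hbd]
  refine ⟨t, ⟨?_, ?_⟩, ?_, ?_⟩
  · exact isPhylo_pair (isPhylo_pair (.leaf a) (.leaf b)) (isPhylo_pair (.leaf c) (.leaf d))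
  · rw [hlt]; simp [hab, hac, had, hbc, hbd, hcd]
  · intro x; rw [hlt, hS]; simp
  · refine displaysAll_helper hsd ?_
    intro x y z hx hy hz hxy hxz hyz hm
    rw [hS] at hx hy hz
    simp only [Set.mem_insert_iff, Set.mem_singleton_iff] at hx hy hz
    rcases hx with rfl | rfl | rfl | rfl <;> rcases hy with rfl | rfl | rfl | rfl <;>
      rcases hz with rfl | rfl | rfl | rfl <;>
      first
        | exact absurd rfl hxy
        | exact absurd rfl hxz
        | exact absurd rfl hyz
        | exact d1 | exact displays_comm d1
        | exact d2 | exact displays_comm d2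
        | exact d3 | exact displays_comm d3
        | exact d4 | exact displays_comm d4
        | exact absurd hm n1a | exact absurd (MemS_swap hm) n1a
        | exact absurd hm n1b | exact absurd (MemS_swap hm) n1b
        | exact absurd hm n2a | exact absurd (MemS_swap hm) n2a
        | exact absurd hm n2b | exact absurd (MemS_swap hm) n2b
        | exact absurd hm n3a | exact absurd (MemS_swap hm) n3a
        | exact absurd hm n3b | exact absurd (MemS_swap hm) n3b
        | exact absurd hm n4a | exact absurd (MemS_swap hm) n4a
        | exact absurd hm n4b | exact absurd (MemS_swap hm) n4b

theorem four_elems {L : Type} {S : Set L} (hfin : S.Finite) (hcard : S.ncard = 4) :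
    ∃ a b c d : L, a ≠ b ∧ a ≠ c ∧ a ≠ d ∧ b ≠ c ∧ b ≠ d ∧ c ≠ d ∧ S = {a, b, c, d} := by
  have hen : S.encard = 4 := by
    rw [← hfin.cast_ncard_eq, hcard]; rfl
  obtain ⟨a, ha⟩ := Set.nonempty_of_encard_ne_zero (s := S) (by rw [hen]; simp)
  have h3 : (S \ {a}).encard = 3 := by
    have := Set.encard_diff_singleton_add_one ha
    rw [hen] at this
    have h4 : (4 : ℕ∞) = 3 + 1 := by rfl
    rw [h4] at this
    exact WithTop.add_right_cancel WithTop.one_ne_top this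
  obtain ⟨b, c, d, hbc, hbd, hcd, hS'⟩ := Set.encard_eq_three.mp h3
  have hb : b ∈ S \ {a} := by rw [hS']; simp
  have hc : c ∈ S \ {a} := by rw [hS']; simp
  have hd : d ∈ S \ {a} := by rw [hS']; simp
  refine ⟨a, b, c, d, fun h => hb.2 h.symm, fun h => hc.2 h.symm, fun h => hd.2 h.symm,
    hbc, hbd, hcd, ?_⟩
  ext x
  constructor
  · intro hx
    by_cases hxa : x = a
    · exact Or.inl hxa
    · have : x ∈ S \ {a} := ⟨hx, hxa⟩
      rw [hS'] at this
      simpa using Or.inr this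
  · intro hx
    rcases hx with rfl | hx
    · exact ha
    · have : x ∈ S \ {a} := by rw [hS']; simpa using hx
      exact this.1

end Phylo

set_option maxHeartbeats 4000000 in
open Phylo in
/-- If `R` is strictly dense on a leaf set `L` with `|L| = 4` and for every
two-element subset `R' ⊆ R` the closure `cl(R')` is contained in `R`,
then `R` is consistent. -/
theorem strictly_dense_four_consistent {L : Type} (S : Set L)
    (hfin : S.Finite) (hcard : S.ncard = 4)
    (R : Set (Trip L)) (hsd : StrictlyDense R S)
    (hcl : ∀ R' ⊆ R, R'.ncard = 2 → ∀ r ∈ cl R', MemS R r.a r.b r.c) :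
    ConsistentOn R S := by

  obtain ⟨a, b, c, d, hab, hac, had, hbc, hbd, hcd, hS⟩ := four_elems hfin hcard
  have ha : a ∈ S := by rw [hS]; simp
  have hb : b ∈ S := by rw [hS]; simp
  have hc : c ∈ S := by rw [hS]; simp
  have hd : d ∈ S := by rw [hS]; simp
  have T1 := hsd.2 a b c ha hb hc hab hac hbc
  have T2 := hsd.2 a b d ha hb hd hab had hbd
  have T3 := hsd.2 a c d ha hc hd hac had hcd
  have T4 := hsd.2 b c d hb hc hd hbc hbd hcd
  rcases T1 with ⟨h1, n1a, n1b⟩ | ⟨n1a, h1, n1b⟩ | ⟨n1a, n1b, h1⟩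
  ·
    rcases T2 with ⟨h2, n2a, n2b⟩ | ⟨n2a, h2, n2b⟩ | ⟨n2a, n2b, h2⟩
    ·
      rcases T3 with ⟨h3, n3a, n3b⟩ | ⟨n3a, h3, n3b⟩ | ⟨n3a, n3b, h3⟩
      ·
        rcases T4 with ⟨h4, n4a, n4b⟩ | ⟨n4a, h4, n4b⟩ | ⟨n4a, n4b, h4⟩
        ·
          exact cat_works hsd a b c d hS hab hac had hbc hbd hcd h1 h2 h3 h4
        ·
          exact absurd (pair_closure hcl (h2) (h3) (Or.inr ⟨hab.symm, hbc⟩) (fun _ hnd u1 u2 => rule_A hnd hbc u1 u2)) n4a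
        ·
          exact absurd (pair_closure hcl (h1) (h4) (Or.inl hbc.symm) (fun _ hnd u1 u2 => (rule_C hnd u1 u2).2)) n3b
      ·
        rcases T4 with ⟨h4, n4a, n4b⟩ | ⟨n4a, h4, n4b⟩ | ⟨n4a, n4b, h4⟩
        ·
          exact absurd (pair_closure hcl (h1) (h3) (Or.inr ⟨hab.symm, hbd⟩) (fun _ hnd u1 u2 => rule_A hnd hbd u1 u2)) n4a
        ·
          exact cat_works hsd a b d c (by rw [hS]; ext u; simp only [Set.mem_insert_iff, Set.mem_singleton_iff]; tauto) hab had hac hbd hbc hcd.symm h2 h1 h3 h4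
        ·
          exact absurd (pair_closure hcl (h1) (h3) (Or.inr ⟨hab.symm, hbd⟩) (fun _ hnd u1 u2 => rule_A hnd hbd u1 u2)) n4b
      ·
        rcases T4 with ⟨h4, n4a, n4b⟩ | ⟨n4a, h4, n4b⟩ | ⟨n4a, n4b, h4⟩
        ·
          exact absurd (pair_closure hcl (MemS_swap h1) (h3) (Or.inl hac.symm) (fun _ hnd u1 u2 => (rule_C hnd u1 u2).2)) n4b
        ·
          exact absurd (pair_closure hcl (MemS_swap h1) (h4) (Or.inr ⟨hab, had⟩) (fun _ hnd u1 u2 => rule_A hnd had u1 u2)) n3b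
        ·
          exact bal_works hsd a b c d hS hab hac had hbc hbd hcd h1 h2 h3 h4
    ·
      rcases T3 with ⟨h3, n3a, n3b⟩ | ⟨n3a, h3, n3b⟩ | ⟨n3a, n3b, h3⟩
      ·
        rcases T4 with ⟨h4, n4a, n4b⟩ | ⟨n4a, h4, n4b⟩ | ⟨n4a, n4b, h4⟩
        ·
          exact absurd (pair_closure hcl (h1) (h2) (Or.inl hbc.symm) (fun _ hnd u1 u2 => (rule_B hnd u1 u2).1)) n3a
        ·
          exact absurd (pair_closure hcl (h1) (h2) (Or.inl hbc.symm) (fun _ hnd u1 u2 => (rule_B hnd u1 u2).1)) n3a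
        ·
          exact absurd (pair_closure hcl (h1) (h2) (Or.inl hbc.symm) (fun _ hnd u1 u2 => (rule_B hnd u1 u2).1)) n3a
      ·
        rcases T4 with ⟨h4, n4a, n4b⟩ | ⟨n4a, h4, n4b⟩ | ⟨n4a, n4b, h4⟩
        ·
          exact absurd (pair_closure hcl (h1) (h3) (Or.inr ⟨hab.symm, hbd⟩) (fun _ hnd u1 u2 => rule_A hnd hbd u1 u2)) n4a
        ·
          exact cat_works hsd a d b c (by rw [hS]; ext u; simp only [Set.mem_insert_iff, Set.mem_singleton_iff]; tauto) had hab hac hbd.symm hcd.symm hbc h2 h3 h1 (MemS_swap h4)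
        ·
          exact absurd (pair_closure hcl (h1) (h3) (Or.inr ⟨hab.symm, hbd⟩) (fun _ hnd u1 u2 => rule_A hnd hbd u1 u2)) n4b
      ·
        rcases T4 with ⟨h4, n4a, n4b⟩ | ⟨n4a, h4, n4b⟩ | ⟨n4a, n4b, h4⟩
        ·
          exact absurd (pair_closure hcl (h1) (h2) (Or.inl hbc.symm) (fun _ hnd u1 u2 => (rule_B hnd u1 u2).1)) n3b
        ·
          exact absurd (pair_closure hcl (h1) (h2) (Or.inl hbc.symm) (fun _ hnd u1 u2 => (rule_B hnd u1 u2).1)) n3b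
        ·
          exact absurd (pair_closure hcl (h1) (h2) (Or.inl hbc.symm) (fun _ hnd u1 u2 => (rule_B hnd u1 u2).1)) n3b
    ·
      rcases T3 with ⟨h3, n3a, n3b⟩ | ⟨n3a, h3, n3b⟩ | ⟨n3a, n3b, h3⟩
      ·
        rcases T4 with ⟨h4, n4a, n4b⟩ | ⟨n4a, h4, n4b⟩ | ⟨n4a, n4b, h4⟩
        ·
          exact absurd (pair_closure hcl (h3) (h1) (Or.inl hcd.symm) (fun _ hnd u1 u2 => (rule_B hnd u1 u2).1)) n2a
        ·
          exact absurd (pair_closure hcl (h3) (h1) (Or.inl hcd.symm) (fun _ hnd u1 u2 => (rule_B hnd u1 u2).1)) n2a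
        ·
          exact absurd (pair_closure hcl (h1) (h4) (Or.inl hbc.symm) (fun _ hnd u1 u2 => (rule_C hnd u1 u2).1)) n2a
      ·
        rcases T4 with ⟨h4, n4a, n4b⟩ | ⟨n4a, h4, n4b⟩ | ⟨n4a, n4b, h4⟩
        ·
          exact absurd (pair_closure hcl (h1) (h3) (Or.inr ⟨hab.symm, hbd⟩) (fun _ hnd u1 u2 => rule_A hnd hbd u1 u2)) n4a
        ·
          exact cat_works hsd b d a c (by rw [hS]; ext u; simp only [Set.mem_insert_iff, Set.mem_singleton_iff]; tauto) hbd hab.symm hbc had.symm hcd.symm hac h2 h4 (MemS_swap h1) (MemS_swap h3)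
        ·
          exact absurd (pair_closure hcl (h1) (h3) (Or.inr ⟨hab.symm, hbd⟩) (fun _ hnd u1 u2 => rule_A hnd hbd u1 u2)) n4b
      ·
        rcases T4 with ⟨h4, n4a, n4b⟩ | ⟨n4a, h4, n4b⟩ | ⟨n4a, n4b, h4⟩
        ·
          exact absurd (pair_closure hcl (MemS_swap h1) (h2) (Or.inl hac.symm) (fun _ hnd u1 u2 => (rule_B hnd u1 u2).1)) n4a
        ·
          exact absurd (pair_closure hcl (MemS_swap h1) (h4) (Or.inr ⟨hab, had⟩) (fun _ hnd u1 u2 => rule_A hnd had u1 u2)) n3b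
        ·
          exact absurd (pair_closure hcl (h1) (h4) (Or.inl hbc.symm) (fun _ hnd u1 u2 => (rule_C hnd u1 u2).1)) n2a
  ·
    rcases T2 with ⟨h2, n2a, n2b⟩ | ⟨n2a, h2, n2b⟩ | ⟨n2a, n2b, h2⟩
    ·
      rcases T3 with ⟨h3, n3a, n3b⟩ | ⟨n3a, h3, n3b⟩ | ⟨n3a, n3b, h3⟩
      ·
        rcases T4 with ⟨h4, n4a, n4b⟩ | ⟨n4a, h4, n4b⟩ | ⟨n4a, n4b, h4⟩
        ·
          exact cat_works hsd a c b d (by rw [hS]; ext u; simp only [Set.mem_insert_iff, Set.mem_singleton_iff]; tauto) hac hab had hbc.symm hcd hbd h1 h3 h2 (MemS_swap h4)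
        ·
          exact absurd (pair_closure hcl (h2) (h3) (Or.inr ⟨hab.symm, hbc⟩) (fun _ hnd u1 u2 => rule_A hnd hbc u1 u2)) n4a
        ·
          exact absurd (pair_closure hcl (h2) (h3) (Or.inr ⟨hab.symm, hbc⟩) (fun _ hnd u1 u2 => rule_A hnd hbc u1 u2)) n4a
      ·
        rcases T4 with ⟨h4, n4a, n4b⟩ | ⟨n4a, h4, n4b⟩ | ⟨n4a, n4b, h4⟩
        ·
          exact absurd (pair_closure hcl (h2) (h1) (Or.inl hbd.symm) (fun _ hnd u1 u2 => (rule_B hnd u1 u2).1)) n3a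
        ·
          exact absurd (pair_closure hcl (h2) (h1) (Or.inl hbd.symm) (fun _ hnd u1 u2 => (rule_B hnd u1 u2).1)) n3a
        ·
          exact absurd (pair_closure hcl (h2) (h1) (Or.inl hbd.symm) (fun _ hnd u1 u2 => (rule_B hnd u1 u2).1)) n3a
      ·
        rcases T4 with ⟨h4, n4a, n4b⟩ | ⟨n4a, h4, n4b⟩ | ⟨n4a, n4b, h4⟩
        ·
          exact absurd (pair_closure hcl (h2) (h1) (Or.inl hbd.symm) (fun _ hnd u1 u2 => (rule_B hnd u1 u2).1)) n3a
        ·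
          exact absurd (pair_closure hcl (h2) (h1) (Or.inl hbd.symm) (fun _ hnd u1 u2 => (rule_B hnd u1 u2).1)) n3a
        ·
          exact absurd (pair_closure hcl (h2) (h1) (Or.inl hbd.symm) (fun _ hnd u1 u2 => (rule_B hnd u1 u2).1)) n3a
    ·
      rcases T3 with ⟨h3, n3a, n3b⟩ | ⟨n3a, h3, n3b⟩ | ⟨n3a, n3b, h3⟩
      ·
        rcases T4 with ⟨h4, n4a, n4b⟩ | ⟨n4a, h4, n4b⟩ | ⟨n4a, n4b, h4⟩
        ·
          exact absurd (pair_closure hcl (h1) (h2) (Or.inr ⟨hac.symm, hcd⟩) (fun _ hnd u1 u2 => rule_A hnd hcd u1 u2)) n4b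
        ·
          exact absurd (pair_closure hcl (h1) (h2) (Or.inr ⟨hac.symm, hcd⟩) (fun _ hnd u1 u2 => rule_A hnd hcd u1 u2)) n4b
        ·
          exact cat_works hsd a c d b (by rw [hS]; ext u; simp only [Set.mem_insert_iff, Set.mem_singleton_iff]; tauto) hac had hab hcd hbc.symm hbd.symm h3 h1 h2 h4
      ·
        rcases T4 with ⟨h4, n4a, n4b⟩ | ⟨n4a, h4, n4b⟩ | ⟨n4a, n4b, h4⟩
        ·
          exact absurd (pair_closure hcl (h1) (h2) (Or.inr ⟨hac.symm, hcd⟩) (fun _ hnd u1 u2 => rule_A hnd hcd u1 u2)) n4b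
        ·
          exact absurd (pair_closure hcl (h1) (h2) (Or.inr ⟨hac.symm, hcd⟩) (fun _ hnd u1 u2 => rule_A hnd hcd u1 u2)) n4b
        ·
          exact cat_works hsd a d c b (by rw [hS]; ext u; simp only [Set.mem_insert_iff, Set.mem_singleton_iff]; tauto) had hac hab hcd.symm hbd.symm hbc.symm h3 h2 h1 (MemS_swap h4)
      ·
        rcases T4 with ⟨h4, n4a, n4b⟩ | ⟨n4a, h4, n4b⟩ | ⟨n4a, n4b, h4⟩
        ·
          exact absurd (pair_closure hcl (h1) (h2) (Or.inr ⟨hac.symm, hcd⟩) (fun _ hnd u1 u2 => rule_A hnd hcd u1 u2)) n4b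
        ·
          exact absurd (pair_closure hcl (h1) (h2) (Or.inr ⟨hac.symm, hcd⟩) (fun _ hnd u1 u2 => rule_A hnd hcd u1 u2)) n4b
        ·
          exact cat_works hsd c d a b (by rw [hS]; ext u; simp only [Set.mem_insert_iff, Set.mem_singleton_iff]; tauto) hcd hac.symm hbc.symm had.symm hbd.symm hab h3 h4 (MemS_swap h1) (MemS_swap h2)
    ·
      rcases T3 with ⟨h3, n3a, n3b⟩ | ⟨n3a, h3, n3b⟩ | ⟨n3a, n3b, h3⟩
      ·
        rcases T4 with ⟨h4, n4a, n4b⟩ | ⟨n4a, h4, n4b⟩ | ⟨n4a, n4b, h4⟩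
        ·
          exact absurd (pair_closure hcl (h2) (h4) (Or.inl had) (fun _ hnd u1 u2 => (rule_B hnd u1 u2).1)) n1b
        ·
          exact bal_works hsd a c b d (by rw [hS]; ext u; simp only [Set.mem_insert_iff, Set.mem_singleton_iff]; tauto) hac hab had hbc.symm hcd hbd h1 h3 h2 h4
        ·
          exact absurd (pair_closure hcl (h2) (h3) (Or.inl had) (fun _ hnd u1 u2 => (rule_C hnd u1 u2).1)) n4b
      ·
        rcases T4 with ⟨h4, n4a, n4b⟩ | ⟨n4a, h4, n4b⟩ | ⟨n4a, n4b, h4⟩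
        ·
          exact absurd (pair_closure hcl (h1) (h3) (Or.inl hbc) (fun _ hnd u1 u2 => (rule_B hnd u1 u2).1)) n2b
        ·
          exact absurd (pair_closure hcl (h1) (h3) (Or.inl hbc) (fun _ hnd u1 u2 => (rule_B hnd u1 u2).1)) n2b
        ·
          exact absurd (pair_closure hcl (h1) (h3) (Or.inl hbc) (fun _ hnd u1 u2 => (rule_B hnd u1 u2).1)) n2b
      ·
        rcases T4 with ⟨h4, n4a, n4b⟩ | ⟨n4a, h4, n4b⟩ | ⟨n4a, n4b, h4⟩
        ·
          exact absurd (pair_closure hcl (h2) (h4) (Or.inl had) (fun _ hnd u1 u2 => (rule_B hnd u1 u2).1)) n1b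
        ·
          exact absurd (pair_closure hcl (h1) (h4) (Or.inl hbc) (fun _ hnd u1 u2 => (rule_C hnd u1 u2).1)) n3a
        ·
          exact absurd (pair_closure hcl (MemS_swap h1) (h4) (Or.inr ⟨hac, had⟩) (fun _ hnd u1 u2 => rule_A hnd had u1 u2)) n2b
  ·
    rcases T2 with ⟨h2, n2a, n2b⟩ | ⟨n2a, h2, n2b⟩ | ⟨n2a, n2b, h2⟩
    ·
      rcases T3 with ⟨h3, n3a, n3b⟩ | ⟨n3a, h3, n3b⟩ | ⟨n3a, n3b, h3⟩
      ·
        rcases T4 with ⟨h4, n4a, n4b⟩ | ⟨n4a, h4, n4b⟩ | ⟨n4a, n4b, h4⟩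
        ·
          exact cat_works hsd b c a d (by rw [hS]; ext u; simp only [Set.mem_insert_iff, Set.mem_singleton_iff]; tauto) hbc hab.symm hbd hac.symm hcd had h1 h4 (MemS_swap h2) (MemS_swap h3)
        ·
          exact absurd (pair_closure hcl (h2) (h3) (Or.inr ⟨hab.symm, hbc⟩) (fun _ hnd u1 u2 => rule_A hnd hbc u1 u2)) n4a
        ·
          exact absurd (pair_closure hcl (h2) (h3) (Or.inr ⟨hab.symm, hbc⟩) (fun _ hnd u1 u2 => rule_A hnd hbc u1 u2)) n4a
      ·
        rcases T4 with ⟨h4, n4a, n4b⟩ | ⟨n4a, h4, n4b⟩ | ⟨n4a, n4b, h4⟩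
        ·
          exact absurd (pair_closure hcl (h3) (h2) (Or.inl hcd) (fun _ hnd u1 u2 => (rule_B hnd u1 u2).1)) n1a
        ·
          exact absurd (pair_closure hcl (h3) (h2) (Or.inl hcd) (fun _ hnd u1 u2 => (rule_B hnd u1 u2).1)) n1a
        ·
          exact absurd (pair_closure hcl (h2) (MemS_swap h4) (Or.inl hbd.symm) (fun _ hnd u1 u2 => (rule_C hnd u1 u2).1)) n1a
      ·
        rcases T4 with ⟨h4, n4a, n4b⟩ | ⟨n4a, h4, n4b⟩ | ⟨n4a, n4b, h4⟩
        ·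
          exact absurd (pair_closure hcl (MemS_swap h2) (h4) (Or.inr ⟨hab, hac⟩) (fun _ hnd u1 u2 => rule_A hnd hac u1 u2)) n3a
        ·
          exact absurd (pair_closure hcl (MemS_swap h2) (h1) (Or.inl had.symm) (fun _ hnd u1 u2 => (rule_B hnd u1 u2).1)) n4a
        ·
          exact absurd (pair_closure hcl (h2) (MemS_swap h4) (Or.inl hbd.symm) (fun _ hnd u1 u2 => (rule_C hnd u1 u2).1)) n1a
    ·
      rcases T3 with ⟨h3, n3a, n3b⟩ | ⟨n3a, h3, n3b⟩ | ⟨n3a, n3b, h3⟩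
      ·
        rcases T4 with ⟨h4, n4a, n4b⟩ | ⟨n4a, h4, n4b⟩ | ⟨n4a, n4b, h4⟩
        ·
          exact absurd (pair_closure hcl (h2) (h3) (Or.inl hbd) (fun _ hnd u1 u2 => (rule_B hnd u1 u2).1)) n1b
        ·
          exact absurd (pair_closure hcl (h3) (MemS_swap h4) (Or.inl hcd.symm) (fun _ hnd u1 u2 => (rule_C hnd u1 u2).1)) n1b
        ·
          exact absurd (pair_closure hcl (h2) (h3) (Or.inl hbd) (fun _ hnd u1 u2 => (rule_B hnd u1 u2).1)) n1b
      ·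
        rcases T4 with ⟨h4, n4a, n4b⟩ | ⟨n4a, h4, n4b⟩ | ⟨n4a, n4b, h4⟩
        ·
          exact bal_works hsd a d b c (by rw [hS]; ext u; simp only [Set.mem_insert_iff, Set.mem_singleton_iff]; tauto) had hab hac hbd.symm hcd.symm hbc h2 h3 h1 h4
        ·
          exact absurd (pair_closure hcl (h1) (h4) (Or.inl hac) (fun _ hnd u1 u2 => (rule_B hnd u1 u2).1)) n2b
        ·
          exact absurd (pair_closure hcl (h1) (h3) (Or.inl hac) (fun _ hnd u1 u2 => (rule_C hnd u1 u2).1)) n4a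
      ·
        rcases T4 with ⟨h4, n4a, n4b⟩ | ⟨n4a, h4, n4b⟩ | ⟨n4a, n4b, h4⟩
        ·
          exact absurd (pair_closure hcl (h2) (h4) (Or.inl hbd) (fun _ hnd u1 u2 => (rule_C hnd u1 u2).1)) n3b
        ·
          exact absurd (pair_closure hcl (h1) (h4) (Or.inl hac) (fun _ hnd u1 u2 => (rule_B hnd u1 u2).1)) n2b
        ·
          exact absurd (pair_closure hcl (MemS_swap h1) (h3) (Or.inr ⟨hbc, hbd⟩) (fun _ hnd u1 u2 => rule_A hnd hbd u1 u2)) n2b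
    ·
      rcases T3 with ⟨h3, n3a, n3b⟩ | ⟨n3a, h3, n3b⟩ | ⟨n3a, n3b, h3⟩
      ·
        rcases T4 with ⟨h4, n4a, n4b⟩ | ⟨n4a, h4, n4b⟩ | ⟨n4a, n4b, h4⟩
        ·
          exact absurd (pair_closure hcl (h1) (h2) (Or.inr ⟨hbc.symm, hcd⟩) (fun _ hnd u1 u2 => rule_A hnd hcd u1 u2)) n3b
        ·
          exact absurd (pair_closure hcl (h3) (MemS_swap h4) (Or.inl hcd.symm) (fun _ hnd u1 u2 => (rule_C hnd u1 u2).1)) n1b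
        ·
          exact absurd (pair_closure hcl (h1) (h2) (Or.inr ⟨hbc.symm, hcd⟩) (fun _ hnd u1 u2 => rule_A hnd hcd u1 u2)) n3b
      ·
        rcases T4 with ⟨h4, n4a, n4b⟩ | ⟨n4a, h4, n4b⟩ | ⟨n4a, n4b, h4⟩
        ·
          exact absurd (pair_closure hcl (h3) (MemS_swap h4) (Or.inl hcd) (fun _ hnd u1 u2 => (rule_C hnd u1 u2).1)) n2b
        ·
          exact absurd (pair_closure hcl (h1) (h2) (Or.inr ⟨hbc.symm, hcd⟩) (fun _ hnd u1 u2 => rule_A hnd hcd u1 u2)) n3b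
        ·
          exact absurd (pair_closure hcl (h1) (h2) (Or.inr ⟨hbc.symm, hcd⟩) (fun _ hnd u1 u2 => rule_A hnd hcd u1 u2)) n3b
      ·
        rcases T4 with ⟨h4, n4a, n4b⟩ | ⟨n4a, h4, n4b⟩ | ⟨n4a, n4b, h4⟩
        ·
          exact cat_works hsd b c d a (by rw [hS]; ext u; simp only [Set.mem_insert_iff, Set.mem_singleton_iff]; tauto) hbc hbd hab.symm hcd hac.symm had.symm h4 h1 h2 h3
        ·
          exact cat_works hsd b d c a (by rw [hS]; ext u; simp only [Set.mem_insert_iff, Set.mem_singleton_iff]; tauto) hbd hbc hab.symm hcd.symm had.symm hac.symm h4 h2 h1 (MemS_swap h3)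
        ·
          exact cat_works hsd c d b a (by rw [hS]; ext u; simp only [Set.mem_insert_iff, Set.mem_singleton_iff]; tauto) hcd hbc.symm hac.symm hbd.symm had.symm hab.symm h4 h3 (MemS_swap h1) (MemS_swap h2)
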